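/- Let I = (0, T*) and let R ⊂ I be open (so R = ⋃_{i∈A} (τ_i, s_i), a countable disjoint union of open intervals). Let IR = I \ R. Suppose there is a constant C > 0 and 5/6 < α < 5/4 such that Σ_{i∈A} (s_i - τ_i)^{(5-4α)/(2α)} ≤ C. Then the (5-4α)/(2α)-dimensional Hausdorff measure of IR is zero, provided IR has Lebesgue measure zero. -/

import Mathlib

/-! Let `E = S \ ⋃ i, (τ i, s i)` and let `F` be the distribution function of the weights
`(s i - τ i) ^ γ` placed at the right endpoints `s i`. For `x < y` in `E`, the interval
`(x, y)` is covered, up to the null set `E`, by the intervals `(τ i, s i)` it contains, so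
subadditivity of `t ↦ t ^ γ` gives `(y - x) ^ γ ≤ F y - F x`. Hence the inverse of `F` is
`1/γ`-Hölder on `F '' E`, and `μH[γ] E ≤ μH[1] (F '' E)`. Finally `F '' E` is Lebesgue-null:
it avoids the disjoint intervals `(F (τ i), F (s i))`, whose lengths `(s i - τ i) ^ γ` add up
to the length of the range of `F`. -/

open MeasureTheory Set
open scoped ENNReal

theorem ENNReal.rpow_tsum_le_tsum_rpow {κ : Type*} (f : κ → ℝ≥0∞) {γ : ℝ} (hγ0 : 0 < γ)
    (hγ1 : γ ≤ 1) : (∑' i, f i) ^ γ ≤ ∑' i, f i ^ γ := by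
  refine le_of_tendsto' ((ENNReal.continuous_rpow_const.tendsto _).comp ENNReal.summable.hasSum)
    fun t => ?_
  exact (Finset.le_sum_of_subadditive (· ^ γ) (ENNReal.zero_rpow_of_pos hγ0).le
    (fun a b => ENNReal.rpow_add_le_add_rpow a b hγ0.le hγ1) t f).trans (ENNReal.sum_le_tsum t)

theorem measure_sdiff_iUnion_eq_zero {Ω κ : Type*} [MeasurableSpace Ω] [Countable κ]
    {μ : Measure Ω} {K : Set Ω} {A : κ → Set Ω} (hA : ∀ i, MeasurableSet (A i))
    (hdisj : Pairwise (Function.onFun Disjoint A)) (hAK : ∀ i, A i ⊆ K) (hK : μ K ≠ ∞)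
    (hsum : ∑' i, μ (A i) = μ K) : μ (K \ ⋃ i, A i) = 0 := by
  have hUK : (⋃ i, A i) ⊆ K := iUnion_subset hAK
  rw [measure_sdiff hUK (MeasurableSet.iUnion hA).nullMeasurableSet
    (ne_top_of_le_ne_top hK (measure_mono hUK)), measure_iUnion hdisj hA, hsum, tsub_self]

theorem hausdorffMeasure_le_of_rpow_edist_le {X Y : Type*} [EMetricSpace X] [EMetricSpace Y]
    [MeasurableSpace X] [BorelSpace X] [MeasurableSpace Y] [BorelSpace Y] {F : X → Y}
    {E : Set X} {d e : ℝ} (hd : 0 < d) (he : 0 < e)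
    (h : ∀ x ∈ E, ∀ y ∈ E, edist x y ^ d ≤ edist (F x) (F y) ^ e) :
    μH[d] E ≤ μH[e] (F '' E) := by
  rcases E.eq_empty_or_nonempty with rfl | ⟨x₀, -⟩
  · simp
  have : Nonempty X := ⟨x₀⟩
  have hinj : InjOn F E := fun x hx y hy hxy => by
    have := h x hx y hy
    rw [hxy, edist_self, ENNReal.zero_rpow_of_pos he, nonpos_iff_eq_zero,
      ENNReal.rpow_eq_zero_iff_of_pos hd] at this
    exact edist_eq_zero.mp this
  have hholder : HolderOnWith 1 (e / d).toNNReal (Function.invFunOn F E) (F '' E) := by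
    rintro _ ⟨x, hx, rfl⟩ _ ⟨y, hy, rfl⟩
    rw [hinj.leftInvOn_invFunOn hx, hinj.leftInvOn_invFunOn hy, ENNReal.coe_one, one_mul,
      Real.coe_toNNReal _ (div_pos he hd).le, ← ENNReal.rpow_le_rpow_iff hd,
      ← ENNReal.rpow_mul, div_mul_cancel₀ e hd.ne']
    exact h x hx y hy
  calc μH[d] E = μH[d] (Function.invFunOn F E '' (F '' E)) := by
        rw [hinj.invFunOn_image subset_rfl]
    _ ≤ 1 ^ d * μH[(e / d).toNNReal * d] (F '' E) :=
      hholder.hausdorffMeasure_image_le (by simpa using div_pos he hd) hd.le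
    _ = μH[e] (F '' E) := by
      rw [ENNReal.one_rpow, one_mul, Real.coe_toNNReal _ (div_pos he hd).le,
        div_mul_cancel₀ e hd.ne']

section EndpointCdf

variable {ι : Type*}

noncomputable def endpointCdf (s w : ι → ℝ) (x : ℝ) : ℝ :=
  ∑' i, {i | s i ≤ x}.indicator w i

variable {s w : ι → ℝ}

theorem endpointCdf_nonneg (hw0 : 0 ≤ w) (x : ℝ) : 0 ≤ endpointCdf s w x :=
  tsum_nonneg fun i => indicator_nonneg (fun j _ => hw0 j) i

theorem endpointCdf_le_tsum (hw0 : 0 ≤ w) (hw : Summable w) (x : ℝ) :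
    endpointCdf s w x ≤ ∑' i, w i :=
  (hw.indicator _).tsum_le_tsum (indicator_le_self' fun j _ => hw0 j) hw

theorem monotone_endpointCdf (hw0 : 0 ≤ w) (hw : Summable w) : Monotone (endpointCdf s w) :=
  fun _ _ hxy => (hw.indicator _).tsum_le_tsum
    (indicator_le_indicator_of_subset (fun _ hi => le_trans (α := ℝ) hi hxy) fun j => hw0 j)
    (hw.indicator _)

theorem endpointCdf_sub (hw : Summable w) {x y : ℝ} (hxy : x ≤ y) :
    endpointCdf s w y - endpointCdf s w x = ∑' i, {i | x < s i ∧ s i ≤ y}.indicator w i := by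
  have hsub : {i | s i ≤ x} ⊆ {i | s i ≤ y} := fun _ hi => le_trans (α := ℝ) hi hxy
  have hdiff : {i | s i ≤ y} \ {i | s i ≤ x} = {i | x < s i ∧ s i ≤ y} := by
    ext i; simp [and_comm]
  rw [endpointCdf, endpointCdf, ← (hw.indicator _).tsum_sub (hw.indicator _), ← hdiff]
  exact tsum_congr fun i => by rw [indicator_sdiff hsub, Pi.sub_apply]

end EndpointCdf

section IntervalFamily

variable {ι : Type*} {τ s : ι → ℝ}

theorem setOf_lt_right_le_eq_singleton (hts : ∀ i, τ i < s i)
    (hdisj : Pairwise (Function.onFun Disjoint fun i => Ioo (τ i) (s i))) (i : ι) :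
    {j | τ i < s j ∧ s j ≤ s i} = {i} := by
  ext j
  refine ⟨fun ⟨hτ, hs⟩ => ?_, fun hj => by simp [mem_singleton_iff.mp hj, hts i]⟩
  by_contra hji
  have := Ioo_disjoint_Ioo.mp (hdisj hji)
  rw [min_eq_left hs] at this
  exact (max_lt (hts j) hτ).not_ge this

theorem endpointCdf_right_sub_left {w : ι → ℝ} (hw : Summable w) (hts : ∀ i, τ i < s i)
    (hdisj : Pairwise (Function.onFun Disjoint fun i => Ioo (τ i) (s i))) (i : ι) :
    endpointCdf s w (s i) - endpointCdf s w (τ i) = w i := by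
  rw [endpointCdf_sub hw (hts i).le, setOf_lt_right_le_eq_singleton hts hdisj, ← tsum_subtype,
    tsum_singleton i w]

theorem volume_image_endpointCdf_compl_eq_zero [Countable ι] {w : ι → ℝ} (hw0 : 0 ≤ w)
    (hw : Summable w) (hts : ∀ i, τ i < s i)
    (hdisj : Pairwise (Function.onFun Disjoint fun i => Ioo (τ i) (s i))) :
    volume (endpointCdf s w '' (⋃ i, Ioo (τ i) (s i))ᶜ) = 0 := by
  set F := endpointCdf s w
  have hF := monotone_endpointCdf (s := s) hw0 hw
  have hmaps : F '' (⋃ i, Ioo (τ i) (s i))ᶜ ⊆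
      Icc 0 (∑' i, w i) \ ⋃ i, Ioo (F (τ i)) (F (s i)) := by
    rintro _ ⟨x, hx, rfl⟩
    refine ⟨⟨endpointCdf_nonneg hw0 x, endpointCdf_le_tsum hw0 hw x⟩, ?_⟩
    simp only [mem_iUnion, mem_Ioo, not_exists, not_and, not_lt]
    intro i hτx
    have hxi : x ∉ Ioo (τ i) (s i) := fun h => hx (mem_iUnion.mpr ⟨i, h⟩)
    rcases le_or_gt x (τ i) with hxτ | hτx'
    · exact absurd (hF hxτ) hτx.not_ge
    · exact hF (not_lt.mp fun hxs => hxi ⟨hτx', hxs⟩)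
  refine measure_mono_null hmaps (measure_sdiff_iUnion_eq_zero (fun _ => measurableSet_Ioo)
    (fun i j hij => ?_) (fun i => ?_) (by simp [Real.volume_Icc]) ?_)
  · rw [Function.onFun, Ioo_disjoint_Ioo, ← hF.map_min, ← hF.map_max]
    exact hF (Ioo_disjoint_Ioo.mp (hdisj hij))
  · exact Ioo_subset_Icc_self.trans
      (Icc_subset_Icc (endpointCdf_nonneg hw0 _) (endpointCdf_le_tsum hw0 hw _))
  · simp only [Real.volume_Ioo, Real.volume_Icc, sub_zero, F,
      endpointCdf_right_sub_left hw hts hdisj, ENNReal.ofReal_tsum_of_nonneg hw0 hw]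

theorem ofReal_sub_le_tsum_of_volume_sdiff_eq_zero [Countable ι] {S : Set ℝ} [S.OrdConnected]
    (hE : volume (S \ ⋃ i, Ioo (τ i) (s i)) = 0) {x y : ℝ}
    (hx : x ∈ S \ ⋃ i, Ioo (τ i) (s i)) (hy : y ∈ S \ ⋃ i, Ioo (τ i) (s i)) :
    ENNReal.ofReal (y - x) ≤ ∑' i : {i | x < s i ∧ s i ≤ y}, ENNReal.ofReal (s i - τ i) := by
  have hcover : Ioo x y ⊆
      (S \ ⋃ i, Ioo (τ i) (s i)) ∪ ⋃ i : {i | x < s i ∧ s i ≤ y}, Ioo (τ i) (s i) := by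
    intro z hz
    by_cases hzU : z ∈ ⋃ i, Ioo (τ i) (s i)
    · obtain ⟨i, hi⟩ := mem_iUnion.mp hzU
      have hsy : s i ≤ y := not_lt.mp fun hys => hy.2 (mem_iUnion.mpr ⟨i, hi.1.trans hz.2, hys⟩)
      exact Or.inr (mem_iUnion.mpr ⟨⟨i, hz.1.trans hi.2, hsy⟩, hi⟩)
    · exact Or.inl ⟨‹S.OrdConnected›.out hx.1 hy.1 (Ioo_subset_Icc_self hz), hzU⟩
  calc ENNReal.ofReal (y - x) = volume (Ioo x y) := Real.volume_Ioo.symm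
    _ ≤ volume (S \ ⋃ i, Ioo (τ i) (s i)) +
          volume (⋃ i : {i | x < s i ∧ s i ≤ y}, Ioo (τ i) (s i)) :=
      (measure_mono hcover).trans (measure_union_le _ _)
    _ ≤ ∑' i : {i | x < s i ∧ s i ≤ y}, volume (Ioo (τ i) (s i)) := by
      rw [hE, zero_add]; exact measure_iUnion_le _
    _ = ∑' i : {i | x < s i ∧ s i ≤ y}, ENNReal.ofReal (s i - τ i) := by
      simp only [Real.volume_Ioo]

theorem rpow_sub_le_endpointCdf_sub [Countable ι] {S : Set ℝ} [S.OrdConnected] {γ : ℝ}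
    (hγ0 : 0 < γ) (hγ1 : γ ≤ 1) (hts : ∀ i, τ i < s i)
    (hsum : Summable fun i => (s i - τ i) ^ γ) (hE : volume (S \ ⋃ i, Ioo (τ i) (s i)) = 0)
    {x y : ℝ} (hx : x ∈ S \ ⋃ i, Ioo (τ i) (s i)) (hy : y ∈ S \ ⋃ i, Ioo (τ i) (s i))
    (hxy : x ≤ y) :
    (y - x) ^ γ ≤ endpointCdf s (fun i => (s i - τ i) ^ γ) y -
      endpointCdf s (fun i => (s i - τ i) ^ γ) x := by
  have hℓ : ∀ i, 0 ≤ s i - τ i := fun i => sub_nonneg.mpr (hts i).le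
  rw [endpointCdf_sub hsum hxy, ← tsum_subtype,
    ← ENNReal.ofReal_le_ofReal_iff (tsum_nonneg fun i => Real.rpow_nonneg (hℓ _) γ)]
  calc ENNReal.ofReal ((y - x) ^ γ) = ENNReal.ofReal (y - x) ^ γ :=
        (ENNReal.ofReal_rpow_of_nonneg (sub_nonneg.mpr hxy) hγ0.le).symm
    _ ≤ (∑' i : {i | x < s i ∧ s i ≤ y}, ENNReal.ofReal (s i - τ i)) ^ γ :=
      ENNReal.rpow_le_rpow (ofReal_sub_le_tsum_of_volume_sdiff_eq_zero hE hx hy) hγ0.le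
    _ ≤ ∑' i : {i | x < s i ∧ s i ≤ y}, ENNReal.ofReal (s i - τ i) ^ γ :=
      ENNReal.rpow_tsum_le_tsum_rpow _ hγ0 hγ1
    _ = ENNReal.ofReal (∑' i : {i | x < s i ∧ s i ≤ y}, (s i - τ i) ^ γ) := by
      rw [ENNReal.ofReal_tsum_of_nonneg (fun i => Real.rpow_nonneg (hℓ _) γ) (hsum.subtype _)]
      exact tsum_congr fun i => ENNReal.ofReal_rpow_of_nonneg (hℓ _) hγ0.le

theorem hausdorffMeasure_sdiff_iUnion_Ioo_eq_zero [Countable ι] {S : Set ℝ} [S.OrdConnected]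
    {γ : ℝ} (hγ0 : 0 < γ) (hγ1 : γ ≤ 1) (hts : ∀ i, τ i < s i)
    (hdisj : Pairwise (Function.onFun Disjoint fun i => Ioo (τ i) (s i)))
    (hsum : Summable fun i => (s i - τ i) ^ γ) (hE : volume (S \ ⋃ i, Ioo (τ i) (s i)) = 0) :
    μH[γ] (S \ ⋃ i, Ioo (τ i) (s i)) = 0 := by
  set E := S \ ⋃ i, Ioo (τ i) (s i)
  set F := endpointCdf s fun i => (s i - τ i) ^ γ
  have hw0 : 0 ≤ fun i => (s i - τ i) ^ γ := fun i =>
    Real.rpow_nonneg (sub_nonneg.mpr (hts i).le) γ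
  have hexpand : ∀ x ∈ E, ∀ y ∈ E, edist x y ^ γ ≤ edist (F x) (F y) ^ (1 : ℝ) := by
    intro x hx y hy
    wlog hxy : x ≤ y generalizing x y
    · rw [edist_comm, edist_comm (F x)]
      exact this y hy x hx (le_of_not_ge hxy)
    rw [ENNReal.rpow_one, edist_comm, edist_comm (F x), edist_dist, edist_dist, Real.dist_eq,
      Real.dist_eq, abs_of_nonneg (sub_nonneg.mpr hxy),
      abs_of_nonneg (sub_nonneg.mpr (monotone_endpointCdf hw0 hsum hxy)),
      ENNReal.ofReal_rpow_of_nonneg (sub_nonneg.mpr hxy) hγ0.le]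
    exact ENNReal.ofReal_le_ofReal (rpow_sub_le_endpointCdf_sub hγ0 hγ1 hts hsum hE hx hy hxy)
  refine le_antisymm ?_ zero_le
  calc μH[γ] E ≤ μH[1] (F '' E) := hausdorffMeasure_le_of_rpow_edist_le hγ0 one_pos hexpand
    _ ≤ volume (F '' (⋃ i, Ioo (τ i) (s i))ᶜ) := by
      rw [hausdorffMeasure_real]; exact measure_mono (image_mono fun _ hx => hx.2)
    _ = 0 := volume_image_endpointCdf_compl_eq_zero hw0 hsum hts hdisj

end IntervalFamily

theorem stmt_9_general {ι : Type*} [Countable ι] (α Tstar : ℝ)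
    (hα1 : 5 / 6 < α) (hα2 : α < 5 / 4)
    (τ s : ι → ℝ) (hts : ∀ i, τ i < s i)
    (hdisj : Pairwise (Function.onFun Disjoint (fun i => Set.Ioo (τ i) (s i))))
    (hsum : Summable (fun i => (s i - τ i) ^ ((5 - 4 * α) / (2 * α))))
    (hleb : volume (Set.Ioo 0 Tstar \ ⋃ i, Set.Ioo (τ i) (s i)) = 0) :
    μH[(5 - 4 * α) / (2 * α)] (Set.Ioo 0 Tstar \ ⋃ i, Set.Ioo (τ i) (s i)) = 0 := by
  have hγ0 : 0 < (5 - 4 * α) / (2 * α) := div_pos (by linarith) (by linarith)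
  have hγ1 : (5 - 4 * α) / (2 * α) ≤ 1 := (div_le_one (by linarith)).mpr (by linarith)
  exact hausdorffMeasure_sdiff_iUnion_Ioo_eq_zero hγ0 hγ1 hts hdisj hsum hleb

theorem stmt_9 {ι : Type*} [Countable ι] (α Tstar C : ℝ)
    (hα1 : 5 / 6 < α) (hα2 : α < 5 / 4) (hT : 0 < Tstar) (hC : 0 < C)
    (τ s : ι → ℝ) (hts : ∀ i, τ i < s i)
    (hdisj : Pairwise (Function.onFun Disjoint (fun i => Set.Ioo (τ i) (s i))))
    (hsub : ∀ i, Set.Ioo (τ i) (s i) ⊆ Set.Ioo 0 Tstar)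
    (hsum : Summable (fun i => (s i - τ i) ^ ((5 - 4 * α) / (2 * α))))
    (hbound : (∑' i, (s i - τ i) ^ ((5 - 4 * α) / (2 * α))) ≤ C)
    (hleb : volume (Set.Ioo 0 Tstar \ ⋃ i, Set.Ioo (τ i) (s i)) = 0) :
    μH[(5 - 4 * α) / (2 * α)] (Set.Ioo 0 Tstar \ ⋃ i, Set.Ioo (τ i) (s i)) = 0 :=
  stmt_9_general α Tstar hα1 hα2 τ s hts hdisj hsum hleb
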